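/- Define H₂(r₁,r₂) = (r₁(1−r₂)r₂²/(1−r₁−r₂)²)·ln((1−r₂)/r₁) − r₁r₂²/(1−r₁−r₂) for (r₁,r₂) ∈ (0,1)² with r₁+r₂ ≠ 1. Then for each fixed r₂ ∈ (0,1), H₂ is strictly increasing in r₁ on its domain. -/

import Mathlib

/-!
Writing `x = r₁ / (1 - r₂)`, one has `H₂(r₁, r₂) = r₂² F(x)` with
`F(x) = x (x - 1 - log x) / (x - 1)²` and `F(1) = 1/2` (`F = h2Profile`), so it suffices that
`F` is strictly increasing on `(0, ∞)`. Away from `x = 1`,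
`F'(x) = ((x + 1) log x - 2 (x - 1)) / (x - 1)³`, which is positive because
`log x - 2 (x - 1) / (x + 1)` has the sign of `x - 1` (the series
`log x = 2 ∑ u^(2k+1) / (2k+1)`, `u = (x - 1) / (x + 1)`). Across `x = 1`, `F(x) - 1/2` has the
sign of `x - 1` since `t - sinh t` has the sign of `-t`, applied to `t = log x`.
-/

/-- `H₂`, extended by its limit value on the anti-diagonal `r₁ + r₂ = 1`. -/
noncomputable def H2 (r₁ r₂ : ℝ) : ℝ :=
  if r₁ + r₂ = 1 then (1 - r₁) ^ 2 / 2
  else r₁ * (1 - r₂) * r₂ ^ 2 / (1 - r₁ - r₂) ^ 2 * Real.log ((1 - r₂) / r₁)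
    - r₁ * r₂ ^ 2 / (1 - r₁ - r₂)

open Real Set

theorem StrictMonoOn.of_inter_Iio_of_inter_Ioi {α β : Type*} [LinearOrder α] [Preorder β]
    {f : α → β} {s : Set α} {c : α} (hl : StrictMonoOn f (s ∩ Iio c))
    (hr : StrictMonoOn f (s ∩ Ioi c)) (hlc : ∀ x ∈ s ∩ Iio c, f x < f c)
    (hcr : ∀ x ∈ s ∩ Ioi c, f c < f x) : StrictMonoOn f s := by
  intro x hx y hy hxy
  rcases lt_trichotomy x c with hxc | rfl | hxc
  · rcases lt_trichotomy y c with hyc | rfl | hyc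
    · exact hl ⟨hx, hxc⟩ ⟨hy, hyc⟩ hxy
    · exact hlc x ⟨hx, hxc⟩
    · exact (hlc x ⟨hx, hxc⟩).trans (hcr y ⟨hy, hyc⟩)
  · exact hcr y ⟨hy, hxy⟩
  · exact hr ⟨hx, hxc⟩ ⟨hy, hxc.trans hxy⟩ hxy

namespace Real

theorem two_mul_sub_one_lt_add_one_mul_log {x : ℝ} (hx : 1 < x) :
    2 * (x - 1) < (x + 1) * log x := by
  have hs := hasSum_log_one_add_inv (inv_pos.2 (sub_pos.2 hx))
  have hu : 2 * (x - 1)⁻¹ + 1 = (x + 1) / (x - 1) := by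
    field_simp [(sub_pos.2 hx).ne']; ring
  rw [inv_inv, add_sub_cancel, hu, one_div_div] at hs
  have hu0 : 0 < (x - 1) / (x + 1) := by apply div_pos <;> linarith
  -- the first two terms of `log x = 2 ∑ u^(2k+1) / (2k+1)`, `u = (x - 1) / (x + 1)`
  have hle := sum_le_hasSum (Finset.range 2) (fun _ _ => by positivity) hs
  norm_num [Finset.sum_range_succ] at hle
  have h : 2 * ((x - 1) / (x + 1)) < log x := by nlinarith [pow_pos hu0 3]
  rw [← mul_div_assoc, div_lt_iff₀ (by linarith)] at h
  linarith

theorem add_one_mul_log_lt_two_mul_sub_one {x : ℝ} (hx₀ : 0 < x) (hx₁ : x < 1) :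
    (x + 1) * log x < 2 * (x - 1) := by
  have h := two_mul_sub_one_lt_add_one_mul_log ((one_lt_inv₀ hx₀).2 hx₁)
  rw [log_inv] at h
  have h' := mul_lt_mul_of_pos_left h hx₀
  field_simp at h'
  linarith

end Real

noncomputable def h2Profile (x : ℝ) : ℝ :=
  if x = 1 then 1 / 2 else x * (x - 1 - log x) / (x - 1) ^ 2

theorem h2Profile_of_ne_one {x : ℝ} (hx : x ≠ 1) :
    h2Profile x = x * (x - 1 - log x) / (x - 1) ^ 2 :=
  if_neg hx

theorem h2Profile_one : h2Profile 1 = 1 / 2 :=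
  if_pos rfl

theorem h2Profile_sub_half {x : ℝ} (hx₀ : 0 < x) (hx₁ : x ≠ 1) :
    h2Profile x - 1 / 2 = x * (sinh (log x) - log x) / (x - 1) ^ 2 := by
  have hx₁' : x - 1 ≠ 0 := sub_ne_zero.2 hx₁
  rw [h2Profile_of_ne_one hx₁, sinh_log hx₀]
  field_simp
  ring

theorem hasDerivAt_h2Profile_formula {x : ℝ} (hx₀ : 0 < x) (hx₁ : x ≠ 1) :
    HasDerivAt (fun x => x * (x - 1 - log x) / (x - 1) ^ 2)
      (((x + 1) * log x - 2 * (x - 1)) / (x - 1) ^ 3) x := by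
  have hx₁' : x - 1 ≠ 0 := sub_ne_zero.2 hx₁
  have hnum : HasDerivAt (fun x => x * (x - 1 - log x)) (1 * (x - 1 - log x) + x * (1 - x⁻¹)) x :=
    (hasDerivAt_id' x).mul (((hasDerivAt_id' x).sub_const 1).sub (hasDerivAt_log hx₀.ne'))
  have hden : HasDerivAt (fun x => (x - 1) ^ 2) (2 * (x - 1)) x := by
    simpa using ((hasDerivAt_id' x).sub_const 1).fun_pow 2
  refine (hnum.div hden (pow_ne_zero 2 hx₁')).congr_deriv ?_
  field_simp
  ring

theorem strictMonoOn_h2Profile_of_subset {s : Set ℝ} (hs : Convex ℝ s) (hs₀ : s ⊆ Ioi 0)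
    (hs₁ : (1 : ℝ) ∉ s) (hsign : ∀ x ∈ s, 0 < ((x + 1) * log x - 2 * (x - 1)) / (x - 1) ^ 3) :
    StrictMonoOn h2Profile s := by
  have hderiv : ∀ x ∈ s, HasDerivAt (fun x => x * (x - 1 - log x) / (x - 1) ^ 2)
      (((x + 1) * log x - 2 * (x - 1)) / (x - 1) ^ 3) x := fun x hx =>
    hasDerivAt_h2Profile_formula (hs₀ hx) (ne_of_mem_of_not_mem hx hs₁)
  refine StrictMonoOn.congr ?_ fun x hx => (h2Profile_of_ne_one (ne_of_mem_of_not_mem hx hs₁)).symm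
  refine strictMonoOn_of_deriv_pos hs (fun x hx => (hderiv x hx).continuousAt.continuousWithinAt)
    fun x hx => ?_
  rw [(hderiv x (interior_subset hx)).deriv]
  exact hsign x (interior_subset hx)

theorem strictMonoOn_h2Profile : StrictMonoOn h2Profile (Ioi 0) := by
  refine StrictMonoOn.of_inter_Iio_of_inter_Ioi (c := 1) ?_ ?_ ?_ ?_
  · rw [Ioi_inter_Iio]
    refine strictMonoOn_h2Profile_of_subset (convex_Ioo 0 1) Ioo_subset_Ioi_self
      (fun h => lt_irrefl _ h.2) fun x hx => div_pos_of_neg_of_neg ?_ ?_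
    · linarith [add_one_mul_log_lt_two_mul_sub_one hx.1 hx.2]
    · exact Odd.pow_neg (by decide) (by linarith [hx.2])
  · refine strictMonoOn_h2Profile_of_subset ((convex_Ioi 0).inter (convex_Ioi 1))
      inter_subset_left (fun h => lt_irrefl (1 : ℝ) h.2) fun x hx => div_pos ?_ ?_
    · linarith [two_mul_sub_one_lt_add_one_mul_log hx.2]
    · exact pow_pos (sub_pos.2 hx.2) 3
  · rintro x ⟨hx₀ : 0 < x, hx₁ : x < 1⟩
    have hsinh : sinh (log x) - log x < 0 := sub_neg.2 (sinh_lt_self_iff.2 (log_neg hx₀ hx₁))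
    have h := h2Profile_sub_half hx₀ hx₁.ne
    rw [h2Profile_one, ← sub_neg, h]
    exact div_neg_of_neg_of_pos (mul_neg_of_pos_of_neg hx₀ hsinh)
      (sq_pos_of_neg (sub_neg.2 hx₁))
  · rintro x ⟨hx₀ : 0 < x, hx₁ : 1 < x⟩
    have hsinh : 0 < sinh (log x) - log x := sub_pos.2 (self_lt_sinh_iff.2 (log_pos hx₁))
    have h := h2Profile_sub_half hx₀ hx₁.ne'
    rw [h2Profile_one, ← sub_pos, h]
    exact div_pos (mul_pos hx₀ hsinh) (pow_pos (sub_pos.2 hx₁) 2)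

theorem H2_eq_sq_mul_h2Profile {r₁ r₂ : ℝ} (h₁ : 0 < r₁) (h₂ : r₂ < 1) :
    H2 r₁ r₂ = r₂ ^ 2 * h2Profile (r₁ / (1 - r₂)) := by
  have hb : 1 - r₂ ≠ 0 := (sub_pos.2 h₂).ne'
  have hx : r₁ / (1 - r₂) = 1 ↔ r₁ + r₂ = 1 := by
    rw [div_eq_one_iff_eq hb]; constructor <;> intro <;> linarith
  unfold H2 h2Profile
  by_cases hc : r₁ + r₂ = 1
  · rw [if_pos hc, if_pos (hx.2 hc), show 1 - r₁ = r₂ by linarith]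
    ring
  · rw [if_neg hc, if_neg (mt hx.1 hc), ← inv_div r₁, log_inv]
    have hd : 1 - r₁ - r₂ ≠ 0 := fun h => hc (by linarith)
    have hx₁ : r₁ / (1 - r₂) - 1 = -(1 - r₁ - r₂) / (1 - r₂) := by
      field_simp; ring
    rw [hx₁]
    generalize log (r₁ / (1 - r₂)) = L
    field_simp
    ring

theorem stmt_15 (r₂ : ℝ) (h : r₂ ∈ Set.Ioo (0 : ℝ) 1) :
    StrictMonoOn (fun r₁ => H2 r₁ r₂) (Set.Ioo (0 : ℝ) 1) := by
  have hr : 0 < 1 - r₂ := sub_pos.2 h.2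
  intro a ha b hb hab
  simp only [H2_eq_sq_mul_h2Profile ha.1 h.2, H2_eq_sq_mul_h2Profile hb.1 h.2]
  exact mul_lt_mul_of_pos_left (strictMonoOn_h2Profile (div_pos ha.1 hr) (div_pos hb.1 hr)
    (div_lt_div_of_pos_right hab hr)) (pow_pos h.1 2)
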